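/- arXiv:1003.6042 — 5 statements merged into one kernel-verified Lean document; each statement's English description precedes it below -/
import Mathlib

section
/- Orthogonality of the Krawtchouk polynomials with respect to the binomial weight: for all l, m ∈ {0,1,…,N}, Σ_{x=0}^{N} K_l(x) · K_m(x) · ω(x) = δ_{l,m} / π_l, where δ_{l,m} is the Kronecker delta. -/
open Finset

/-- The Krawtchouk polynomial `K_l(x; N; p)`, defined via the hypergeometric sum. -/
noncomputable def krawtchouk (N : ℕ) (p : ℝ) (l x : ℕ) : ℝ :=
  ∑ k ∈ Finset.range (N + 1),
    ((ascPochhammer ℝ k).eval (-(l : ℝ)) * (ascPochhammer ℝ k).eval (-(x : ℝ))) /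
      ((ascPochhammer ℝ k).eval (-(N : ℝ)) * (Nat.factorial k : ℝ)) * (1 / p) ^ k

/-- The binomial weight `ω(x) = C(N,x) p^x q^{N-x}`. -/
noncomputable def binomWeight (N : ℕ) (p q : ℝ) (x : ℕ) : ℝ :=
  (N.choose x : ℝ) * p ^ x * q ^ (N - x)

/-- `π_l = C(N,l) (p/q)^l`. -/
noncomputable def krawtchoukNorm (N : ℕ) (p q : ℝ) (l : ℕ) : ℝ :=
  (N.choose l : ℝ) * (p / q) ^ l

/-!
Since `(-n)_k = (-1)^k k! C(n,k)`, the Krawtchouk polynomial is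
`K_l(x) = ∑_k C(l,k) C(x,k) / C(N,k) · (-1/p)^k`, and summing against `C(N,l) s^l` gives the
generating function `G_s(x) := ∑_l C(N,l) K_l(x) s^l = (1 + s - s/p)^x (1 + s)^(N-x)`.
Against the binomial weight, two such generating functions multiply to
`∑_x ω(x) G_s(x) G_t(x) = (p (1 + s - s/p)(1 + t - t/p) + q (1 + s)(1 + t))^N = (1 + s t q/p)^N`.
Comparing coefficients of `s^l` and then of `t^m` (polynomial identities over the infinite
field `ℝ`) yields `C(N,m) ∑_x K_l(x) K_m(x) ω(x) = δ_{lm} (q/p)^l`.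
-/

theorem ascPochhammer_eval_neg_natCast {R : Type*} [CommRing R] (n k : ℕ) :
    (ascPochhammer R k).eval (-(n : R)) = (-1) ^ k * (k.factorial * n.choose k) := by
  rw [ascPochhammer_eval_neg_eq_descPochhammer, descPochhammer_eval_eq_descFactorial,
    Nat.descFactorial_eq_factorial_mul_choose, Nat.cast_mul]

theorem natCast_choose_ne_zero {R : Type*} [AddMonoidWithOne R] [CharZero R] {N k : ℕ}
    (hk : k ≤ N) : (N.choose k : R) ≠ 0 :=
  Nat.cast_ne_zero.mpr (Nat.choose_ne_zero_iff.mpr hk)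

theorem sum_range_choose_mul_choose_mul_pow {R : Type*} [CommSemiring R] (N k : ℕ) (s : R) :
    ∑ l ∈ range (N + 1), (N.choose l * l.choose k : R) * s ^ l =
      N.choose k * s ^ k * (1 + s) ^ (N - k) := by
  rcases lt_or_ge N k with hNk | hkN
  · rw [Nat.choose_eq_zero_of_lt hNk]
    simp only [Nat.cast_zero, zero_mul]
    refine sum_eq_zero fun l hl => ?_
    rw [Nat.choose_eq_zero_of_lt (n := l) (by grind), Nat.cast_zero, mul_zero, zero_mul]
  rw [← sum_range_add_sum_Ico _ (Nat.le_succ_of_le hkN), sum_Ico_eq_sum_range,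
    show N + 1 - k = N - k + 1 by omega, add_comm 1 s, add_pow, mul_sum]
  have hlow : ∑ l ∈ range k, (N.choose l * l.choose k : R) * s ^ l = 0 :=
    sum_eq_zero fun l hl => by
      rw [Nat.choose_eq_zero_of_lt (mem_range.mp hl), Nat.cast_zero, mul_zero, zero_mul]
  rw [hlow, zero_add]
  refine sum_congr rfl fun j _ => ?_
  have hchoose := Nat.choose_mul (n := N) (Nat.le_add_right k j)
  rw [Nat.add_sub_cancel_left] at hchoose
  rw [← Nat.cast_mul, hchoose, Nat.cast_mul, one_pow, pow_add]
  ring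

theorem sum_range_choose_mul_pow_mul_pow {R : Type*} [CommSemiring R] {x N : ℕ} (hx : x ≤ N)
    (a b : R) :
    ∑ k ∈ range (N + 1), (x.choose k : R) * a ^ k * b ^ (N - k) =
      (a + b) ^ x * b ^ (N - x) := by
  rw [← sum_range_add_sum_Ico _ (Nat.succ_le_succ hx), add_pow, sum_mul]
  have hhigh : ∑ k ∈ Ico (x + 1) (N + 1), (x.choose k : R) * a ^ k * b ^ (N - k) = 0 :=
    sum_eq_zero fun k hk => by
      rw [Nat.choose_eq_zero_of_lt (mem_Ico.mp hk).1, Nat.cast_zero, zero_mul, zero_mul]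
  rw [hhigh, add_zero]
  refine sum_congr rfl fun k hk => ?_
  rw [show N - k = x - k + (N - x) by grind, pow_add]
  ring

theorem eq_of_forall_sum_range_mul_pow_eq {R : Type*} [CommRing R] [IsDomain R] [Infinite R]
    {n : ℕ} {a b : ℕ → R}
    (h : ∀ t : R, ∑ i ∈ range n, a i * t ^ i = ∑ i ∈ range n, b i * t ^ i)
    {j : ℕ} (hj : j < n) : a j = b j := by
  open Polynomial in
  have hpoly : ∑ i ∈ range n, C (a i) * X ^ i = ∑ i ∈ range n, C (b i) * X ^ i :=
    funext fun t => by simpa [eval_finsetSum] using h t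
  simpa [finsetSum_coeff, coeff_C_mul, coeff_X_pow, hj] using congrArg (coeff · j) hpoly

theorem krawtchouk_eq_sum_choose (N : ℕ) (p : ℝ) (l x : ℕ) :
    krawtchouk N p l x =
      ∑ k ∈ range (N + 1), (l.choose k * x.choose k / N.choose k : ℝ) * (-1 / p) ^ k := by
  refine sum_congr rfl fun k hk => ?_
  have hN := natCast_choose_ne_zero (R := ℝ) (Nat.lt_succ_iff.mp (mem_range.mp hk))
  simp only [ascPochhammer_eval_neg_natCast]
  field_simp
  ring

noncomputable def krawtchoukGen (N : ℕ) (p s : ℝ) (x : ℕ) : ℝ :=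
  (1 + s - s / p) ^ x * (1 + s) ^ (N - x)

theorem sum_choose_mul_krawtchouk_mul_pow {N x : ℕ} (hx : x ≤ N) (p s : ℝ) :
    ∑ l ∈ range (N + 1), (N.choose l : ℝ) * krawtchouk N p l x * s ^ l =
      krawtchoukGen N p s x := by
  calc ∑ l ∈ range (N + 1), (N.choose l : ℝ) * krawtchouk N p l x * s ^ l
      = ∑ k ∈ range (N + 1), (x.choose k / N.choose k * (-1 / p) ^ k : ℝ) *
          ∑ l ∈ range (N + 1), (N.choose l * l.choose k : ℝ) * s ^ l := by
        simp only [krawtchouk_eq_sum_choose, mul_sum, sum_mul]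
        rw [sum_comm]
        refine sum_congr rfl fun k _ => sum_congr rfl fun l _ => ?_
        ring
    _ = ∑ k ∈ range (N + 1), (x.choose k : ℝ) * (-1 / p * s) ^ k * (1 + s) ^ (N - k) := by
        refine sum_congr rfl fun k hk => ?_
        have hN := natCast_choose_ne_zero (R := ℝ) (Nat.lt_succ_iff.mp (mem_range.mp hk))
        rw [sum_range_choose_mul_choose_mul_pow, mul_pow]
        field_simp
    _ = krawtchoukGen N p s x := by
        rw [sum_range_choose_mul_pow_mul_pow hx, krawtchoukGen]
        ring

theorem sum_choose_mul_sum_mul_krawtchouk_mul_pow (N : ℕ) (p s : ℝ) (w : ℕ → ℝ) :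
    ∑ l ∈ range (N + 1),
        (N.choose l : ℝ) * (∑ x ∈ range (N + 1), w x * krawtchouk N p l x) * s ^ l =
      ∑ x ∈ range (N + 1), w x * krawtchoukGen N p s x := by
  simp only [mul_sum, sum_mul]
  rw [sum_comm]
  refine sum_congr rfl fun x hx => ?_
  rw [← sum_choose_mul_krawtchouk_mul_pow (Nat.lt_succ_iff.mp (mem_range.mp hx)), mul_sum]
  exact sum_congr rfl fun l _ => by ring

theorem sum_binomWeight_mul_pow_mul_pow (N : ℕ) (p q a b : ℝ) :
    ∑ x ∈ range (N + 1), binomWeight N p q x * a ^ x * b ^ (N - x) = (p * a + q * b) ^ N := by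
  rw [add_pow]
  refine sum_congr rfl fun x _ => ?_
  rw [binomWeight, mul_pow, mul_pow]
  ring

theorem sum_binomWeight_mul_krawtchoukGen_mul_krawtchoukGen {p q : ℝ} (hp : p ≠ 0)
    (hq : q = 1 - p) (N : ℕ) (s t : ℝ) :
    ∑ x ∈ range (N + 1), binomWeight N p q x * krawtchoukGen N p s x * krawtchoukGen N p t x =
      (1 + s * t * (q / p)) ^ N := by
  have hpq : p * ((1 + s - s / p) * (1 + t - t / p)) + q * ((1 + s) * (1 + t)) =
      1 + s * t * (q / p) := by
    subst hq
    field_simp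
    ring
  rw [← hpq, ← sum_binomWeight_mul_pow_mul_pow]
  refine sum_congr rfl fun x _ => ?_
  rw [krawtchoukGen, krawtchoukGen, mul_pow, mul_pow]
  ring

theorem one_add_mul_pow_eq_sum {R : Type*} [CommSemiring R] (N : ℕ) (c s : R) :
    (1 + c * s) ^ N = ∑ l ∈ range (N + 1), (N.choose l : R) * c ^ l * s ^ l := by
  rw [add_comm, add_pow]
  refine sum_congr rfl fun l _ => ?_
  rw [one_pow, mul_pow]
  ring

theorem sum_binomWeight_mul_krawtchouk_mul_krawtchoukGen {p q : ℝ} (hp : p ≠ 0)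
    (hq : q = 1 - p) {N l : ℕ} (hl : l ≤ N) (t : ℝ) :
    ∑ x ∈ range (N + 1), binomWeight N p q x * krawtchouk N p l x * krawtchoukGen N p t x =
      (t * (q / p)) ^ l := by
  simp only [mul_right_comm (binomWeight N p q _) (krawtchouk N p _ _)]
  have hcoeff := eq_of_forall_sum_range_mul_pow_eq
    (a := fun l => (N.choose l : ℝ) *
      ∑ x ∈ range (N + 1), binomWeight N p q x * krawtchoukGen N p t x * krawtchouk N p l x)
    (b := fun l => (N.choose l : ℝ) * (t * (q / p)) ^ l) (fun s => ?_) (Nat.lt_succ_of_le hl)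
  · exact mul_left_cancel₀ (natCast_choose_ne_zero hl) hcoeff
  · rw [sum_choose_mul_sum_mul_krawtchouk_mul_pow,
      sum_binomWeight_mul_krawtchoukGen_mul_krawtchoukGen hp hq, one_add_mul_pow_eq_sum]
    exact sum_congr rfl fun l _ => by ring

theorem choose_mul_sum_krawtchouk_mul_krawtchouk_mul_binomWeight {p q : ℝ} (hp : p ≠ 0)
    (hq : q = 1 - p) {N l m : ℕ} (hl : l ≤ N) (hm : m ≤ N) :
    (N.choose m : ℝ) *
        ∑ x ∈ range (N + 1), krawtchouk N p l x * krawtchouk N p m x * binomWeight N p q x =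
      if m = l then (q / p) ^ l else 0 := by
  simp only [mul_comm (krawtchouk N p l _ * _) (binomWeight N p q _), ← mul_assoc]
  refine eq_of_forall_sum_range_mul_pow_eq (a := fun m => (N.choose m : ℝ) *
      ∑ x ∈ range (N + 1), binomWeight N p q x * krawtchouk N p l x * krawtchouk N p m x)
    (b := fun m => if m = l then (q / p) ^ l else 0) (fun t => ?_) (Nat.lt_succ_of_le hm)
  rw [sum_choose_mul_sum_mul_krawtchouk_mul_pow,
    sum_binomWeight_mul_krawtchouk_mul_krawtchoukGen hp hq hl]
  simp [sum_ite_eq', Nat.lt_succ_of_le hl, mul_pow, mul_comm]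

theorem krawtchouk_orthogonality_general (N : ℕ) (p : ℝ) (hp : 0 < p)
    (q : ℝ) (hq : q = 1 - p) (l m : ℕ) (hl : l ≤ N) (hm : m ≤ N) :
    ∑ x ∈ Finset.range (N + 1),
        krawtchouk N p l x * krawtchouk N p m x * binomWeight N p q x =
      (if l = m then (1 : ℝ) else 0) / krawtchoukNorm N p q l := by
  have horth := choose_mul_sum_krawtchouk_mul_krawtchouk_mul_binomWeight hp.ne' hq hl hm
  have hCm : (N.choose m : ℝ) ≠ 0 := natCast_choose_ne_zero hm
  rcases eq_or_ne l m with rfl | hlm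
  · rw [if_pos rfl] at horth ⊢
    rw [← mul_right_inj' hCm, horth, krawtchoukNorm, one_div, mul_inv, ← mul_assoc,
      mul_inv_cancel₀ hCm, one_mul, ← inv_pow, inv_div]
  · rw [if_neg hlm.symm] at horth
    rw [if_neg hlm, zero_div]
    exact (mul_eq_zero.mp horth).resolve_left hCm

/-- Orthogonality of the Krawtchouk polynomials with respect to the binomial weight. -/
theorem krawtchouk_orthogonality (N : ℕ) (p : ℝ) (hp : 0 < p) (hp1 : p < 1)
    (q : ℝ) (hq : q = 1 - p) (l m : ℕ) (hl : l ≤ N) (hm : m ≤ N) :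
    ∑ x ∈ Finset.range (N + 1),
        krawtchouk N p l x * krawtchouk N p m x * binomWeight N p q x =
      (if l = m then (1 : ℝ) else 0) / krawtchoukNorm N p q l :=
  krawtchouk_orthogonality_general N p hp q hq l m hl hm
end

section
/- Karlin–McGregor representation of the Ehrenfest semigroup (Theorem 3.3(a) via the birth-and-death generator): let Q be the (N+1)×(N+1) real matrix indexed by {0,…,N} with Q_{i,i+1} = λα(N−i), Q_{i,i−1} = λβ·i, Q_{i,i} = −λα(N−i) − λβ·i, and Q_{i,j} = 0 otherwise. Then for every t ≥ 0 and all i, j ∈ {0,…,N}, the (i,j) entry of the matrix exponential exp(t·Q) equals p_{ij}(t). -/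
/-!
The Krawtchouk matrix `K = (K_l(x))_{l,x}` diagonalises the generator: the three-term recurrence
of `K_l(x)` in the degree `l` is exactly `Q K = K D` with `D = diag(-λ(α+β)x)`, so
`exp(tQ) = K exp(tD) K⁻¹`, and it remains to invert `K`. Detailed balance of `Q` with respect to
the binomial weights `π` makes the Gram matrix `Kᵀ diag(π) K` commute with `D`, whose entries
are distinct, so it is diagonal; the same symmetry gives a recursion for its diagonal which, started
from `∑ π = 1`, yields `‖K_j‖² = 1 / (C(N,j) (p/q)^j)`. Hence
`K⁻¹ = diag(π) Kᵀ diag(C(N,j) (p/q)^j)`, and the entries of `K exp(tD) K⁻¹` are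
`p_{ij}(t)`.
-/


open Finset

/-- Transition probabilities `p_{ij}(t)` of the continuous-time Ehrenfest process,
where `p = α/(α+β)` and `q = 1 - p`. -/
noncomputable def ehrenfestP (N : ℕ) (p q lam α β : ℝ) (i j : ℕ) (t : ℝ) : ℝ :=
  (N.choose j : ℝ) * (p / q) ^ j *
    ∑ x ∈ Finset.range (N + 1),
      (N.choose x : ℝ) * p ^ x * q ^ (N - x) * krawtchouk N p i x * krawtchouk N p j x *
        Real.exp (-(lam * (α + β) * (x : ℝ) * t))

open Polynomial Matrix

/-- The summand of `krawtchouk` at a real degree `r`, so that `r - 1` makes sense at `r = 0`. -/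
noncomputable def krawtchoukTerm (N : ℕ) (p r : ℝ) (x k : ℕ) : ℝ :=
  ((ascPochhammer ℝ k).eval (-r) * (ascPochhammer ℝ k).eval (-(x : ℝ))) /
    ((ascPochhammer ℝ k).eval (-(N : ℝ)) * (k.factorial : ℝ)) * (1 / p) ^ k

noncomputable def krawtchoukTail (N : ℕ) (p r : ℝ) (x : ℕ) : ℕ → ℝ
  | 0 => 0
  | m + 1 => (ascPochhammer ℝ m).eval (-r) * (ascPochhammer ℝ (m + 1)).eval (-(x : ℝ)) /
      ((ascPochhammer ℝ m).eval (-(N : ℝ)) * (m.factorial : ℝ)) * (1 / p) ^ m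

lemma ascPochhammer_succ_eval_left (k : ℕ) (y : ℝ) :
    (ascPochhammer ℝ (k + 1)).eval y = y * (ascPochhammer ℝ k).eval (y + 1) := by
  simp [ascPochhammer_succ_left, eval_comp]

lemma ascPochhammer_eval_neg_natCast_ne_zero {N k : ℕ} (hk : k ≤ N) :
    (ascPochhammer ℝ k).eval (-(N : ℝ)) ≠ 0 := by
  simp only [ne_eq, ascPochhammer_eval_eq_zero_iff, neg_neg, not_exists, not_and]
  intro m hm h
  exact absurd (Nat.cast_injective h) (by omega)

section Recurrence

variable {N : ℕ} {p q : ℝ}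

/-- Termwise form of the contiguous relation of the terminating `₂F₁` defining `K_r(x)`. -/
lemma krawtchoukTerm_contiguous (hp : p ≠ 0) (hpq : p + q = 1) (r : ℝ)
    (x : ℕ) {k : ℕ} (hk : k ≤ N) :
    p * (N - r) * krawtchoukTerm N p (r + 1) x k + q * r * krawtchoukTerm N p (r - 1) x k
      - (p * (N - r) + q * r) * krawtchoukTerm N p r x k + x * krawtchoukTerm N p r x k
      = krawtchoukTail N p r x k - krawtchoukTail N p r x (k + 1) := by
  obtain rfl : q = 1 - p := by linear_combination hpq
  cases k with
  | zero => simp [krawtchoukTerm, krawtchoukTail]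
  | succ m =>
    have hN₀ := ascPochhammer_eval_neg_natCast_ne_zero (N := N) (k := m) (by omega)
    have hNm : -(N : ℝ) + m ≠ 0 := by
      have : (m : ℝ) < N := by exact_mod_cast (by omega : m < N)
      linarith
    have h₁ : (ascPochhammer ℝ (m + 1)).eval (-(r + 1)) =
        -(r + 1) * (ascPochhammer ℝ m).eval (-r) := by
      rw [ascPochhammer_succ_eval_left, show -(r + 1) + 1 = -r by ring]
    have h₂ : (ascPochhammer ℝ (m + 1)).eval (-r) =
        (ascPochhammer ℝ m).eval (-r) * (m - r) := by
      rw [ascPochhammer_succ_eval]; ring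
    -- `(-r)_{m+2}` expanded from the left and from the right
    have h₃ : r * (ascPochhammer ℝ (m + 1)).eval (-(r - 1)) =
        (ascPochhammer ℝ m).eval (-r) * (m - r) * (r - m - 1) := by
      have h := ascPochhammer_succ_eval_left (m + 1) (-r)
      rw [ascPochhammer_succ_eval, h₂] at h
      rw [show -(r - 1) = -r + 1 by ring]
      push_cast at h
      linear_combination h
    set E := (ascPochhammer ℝ (m + 1)).eval (-(x : ℝ)) /
      ((ascPochhammer ℝ m).eval (-(N : ℝ)) * (-(N : ℝ) + m) *
        ((m + 1) * (m.factorial : ℝ))) * (1 / p) ^ (m + 1) with hE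
    have hT : krawtchoukTail N p r x (m + 1) =
        (ascPochhammer ℝ m).eval (-r) * E * ((-(N : ℝ) + m) * (m + 1) * p) := by
      simp only [krawtchoukTail, hE, pow_succ]
      field_simp
    have hT' : krawtchoukTail N p r x (m + 2) =
        (ascPochhammer ℝ m).eval (-r) * (m - r) * (-(x : ℝ) + (m + 1)) * E := by
      simp only [krawtchoukTail, hE, ascPochhammer_succ_eval (m + 1) (-(x : ℝ)), h₂,
        ascPochhammer_succ_eval m (-(N : ℝ)), Nat.factorial_succ]
      push_cast
      ring
    have hterm (s : ℝ) :
        krawtchoukTerm N p s x (m + 1) = (ascPochhammer ℝ (m + 1)).eval (-s) * E := by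
      simp only [krawtchoukTerm, hE, ascPochhammer_succ_eval m (-(N : ℝ)), Nat.factorial_succ]
      push_cast
      ring
    rw [hterm, hterm, hterm, hT, hT', h₁, h₂]
    linear_combination (1 - p) * E * h₃

lemma krawtchouk_eq_sum_krawtchoukTerm (l x : ℕ) :
    krawtchouk N p l x = ∑ k ∈ range (N + 1), krawtchoukTerm N p l x k :=
  rfl

lemma krawtchoukTail_succ_eq_zero {x : ℕ} (hx : x ≤ N) (r : ℝ) :
    krawtchoukTail N p r x (N + 1) = 0 := by
  simp [krawtchoukTail, ascPochhammer_eval_neg_coe_nat_of_lt (Nat.lt_succ_of_le hx)]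

lemma sum_krawtchoukTerm_contiguous (hp : p ≠ 0) (hpq : p + q = 1) (r : ℝ)
    {x : ℕ} (hx : x ≤ N) :
    p * (N - r) * ∑ k ∈ range (N + 1), krawtchoukTerm N p (r + 1) x k
      + q * r * ∑ k ∈ range (N + 1), krawtchoukTerm N p (r - 1) x k
      - (p * (N - r) + q * r) * ∑ k ∈ range (N + 1), krawtchoukTerm N p r x k
      + x * ∑ k ∈ range (N + 1), krawtchoukTerm N p r x k = 0 := by
  simp only [mul_sum, ← sum_add_distrib, ← sum_sub_distrib]
  rw [sum_congr rfl fun k hk =>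
      krawtchoukTerm_contiguous hp hpq r x (Nat.lt_succ_iff.mp (mem_range.mp hk)),
    sum_range_sub', krawtchoukTail_succ_eq_zero hx]
  simp [krawtchoukTail]

-- At `l = 0` the junk value `l - 1 = 0` is harmless since it is multiplied by `l`.
theorem krawtchouk_recurrence (hp : p ≠ 0) (hpq : p + q = 1) (l : ℕ)
    {x : ℕ} (hx : x ≤ N) :
    p * (N - l) * krawtchouk N p (l + 1) x + q * l * krawtchouk N p (l - 1) x
      - (p * (N - l) + q * l) * krawtchouk N p l x = -(x * krawtchouk N p l x) := by
  have h := sum_krawtchoukTerm_contiguous hp hpq l hx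
  have hl : (l : ℝ) * krawtchouk N p (l - 1) x =
      l * ∑ k ∈ range (N + 1), krawtchoukTerm N p (l - 1) x k := by
    rcases l with _ | l
    · simp
    · simp [krawtchouk_eq_sum_krawtchoukTerm]
  simp only [krawtchouk_eq_sum_krawtchoukTerm, Nat.cast_succ] at hl ⊢
  linear_combination h + q * hl

end Recurrence

theorem krawtchouk_comm (N : ℕ) (p : ℝ) (l x : ℕ) :
    krawtchouk N p l x = krawtchouk N p x l := by
  simp only [krawtchouk, mul_comm]

@[simp]
theorem krawtchouk_zero_left (N : ℕ) (p : ℝ) (x : ℕ) : krawtchouk N p 0 x = 1 := by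
  rw [krawtchouk, sum_eq_single_of_mem 0 (by simp)]
  · simp
  · intro k _ hk
    simp [hk]

noncomputable def ehrenfestRate (N : ℕ) (a b : ℝ) (i j : ℕ) : ℝ :=
  if j = i + 1 then a * (N - i)
  else if j + 1 = i then b * i
  else if i = j then -(a * (N - i)) - b * i
  else 0

lemma ehrenfestRate_mul_eq (N : ℕ) (a b : ℝ) (f : ℕ → ℝ) (i k : ℕ) :
    ehrenfestRate N a b i k * f k =
      (if k = i + 1 then a * (N - i) * f (i + 1) else 0) +
      (if k = i - 1 then b * i * f (i - 1) else 0) +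
      (if k = i then -((a * (N - i) + b * i) * f i) else 0) := by
  unfold ehrenfestRate
  split_ifs <;> first | omega | skip
  · subst k; ring
  · rw [show k = i - 1 by omega]; ring
  · obtain rfl : i = 0 := by omega
    subst k; simp
  · subst k; ring
  · ring

def EhrenfestDetailedBalance (N : ℕ) (a b : ℝ) (w : ℕ → ℝ) : Prop :=
  ∀ i < N, w i * (a * (N - i)) = w (i + 1) * (b * (i + 1))

lemma ehrenfestRate_balance {N : ℕ} {a b : ℝ} {w : ℕ → ℝ}
    (hw : EhrenfestDetailedBalance N a b w) {i j : ℕ} (hi : i ≤ N) (hj : j ≤ N) :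
    w i * ehrenfestRate N a b i j = ehrenfestRate N a b j i * w j := by
  unfold ehrenfestRate
  split_ifs <;> first | omega | skip
  · subst j; push_cast; linear_combination hw i (by omega)
  · subst i; push_cast; linear_combination -hw j (by omega)
  · subst j; ring
  · ring

noncomputable def ehrenfestGenerator (N : ℕ) (a b : ℝ) :
    Matrix (Fin (N + 1)) (Fin (N + 1)) ℝ :=
  of fun i j => ehrenfestRate N a b i j

section Generator

variable {N : ℕ} {a b : ℝ}

lemma ehrenfestGenerator_apply (i j : Fin (N + 1)) :
    ehrenfestGenerator N a b i j = ehrenfestRate N a b i j :=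
  rfl

lemma ehrenfestGenerator_mul_mul_eq_smul (c : ℝ) :
    ehrenfestGenerator N (c * a) (c * b) = c • ehrenfestGenerator N a b := by
  ext i j
  rw [Matrix.smul_apply]
  simp only [ehrenfestGenerator_apply, smul_eq_mul, ehrenfestRate]
  split_ifs <;> ring

theorem sum_ehrenfestGenerator_mul (i : Fin (N + 1)) (f : ℕ → ℝ) :
    ∑ k, ehrenfestGenerator N a b i k * f k =
      a * (N - i) * f (i + 1) + b * i * f (i - 1) - (a * (N - i) + b * i) * f i := by
  simp only [ehrenfestGenerator_apply]
  rw [Fin.sum_univ_eq_sum_range (fun k => ehrenfestRate N a b i k * f k)]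
  simp only [ehrenfestRate_mul_eq, sum_add_distrib, sum_ite_eq', mem_range]
  have hi := i.isLt
  rw [if_pos (by omega : (i : ℕ) - 1 < N + 1), if_pos hi]
  split_ifs
  · ring
  -- at `i = N` the neighbour `N + 1` leaves the range, but its rate `a * (N - N)` vanishes
  · rw [show ((i : ℕ) : ℝ) = N by exact_mod_cast (by omega : (i : ℕ) = N)]
    ring

theorem diagonal_mul_ehrenfestGenerator {w : ℕ → ℝ} (hw : EhrenfestDetailedBalance N a b w) :
    diagonal (fun i : Fin (N + 1) => w i) * ehrenfestGenerator N a b =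
      (ehrenfestGenerator N a b)ᵀ * diagonal (fun i : Fin (N + 1) => w i) := by
  ext i j
  simp only [diagonal_mul, mul_diagonal, transpose_apply, ehrenfestGenerator_apply]
  exact ehrenfestRate_balance hw (Nat.lt_succ_iff.mp i.isLt) (Nat.lt_succ_iff.mp j.isLt)

theorem mul_weight_eq_of_ehrenfestGenerator_mul_diagonal {w : ℕ → ℝ} (hb : b ≠ 0)
    (hw : EhrenfestDetailedBalance N a b w) {ξ : Fin (N + 1) → ℝ}
    (hξ : ehrenfestGenerator N a b * diagonal ξ = diagonal ξ * (ehrenfestGenerator N a b)ᵀ)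
    (j : Fin (N + 1)) : ξ j * w j = ξ 0 * w 0 := by
  induction j using Fin.induction with
  | zero => rfl
  | succ i ih =>
    have h := congr_fun₂ hξ i.succ i.castSucc
    simp only [mul_diagonal, diagonal_mul, transpose_apply, ehrenfestGenerator_apply,
      ehrenfestRate, Fin.val_succ, Fin.val_castSucc] at h ih
    simp only [if_neg (by omega : ¬ (i : ℕ) = i + 1 + 1)] at h
    have hi : ((i : ℕ) + 1 : ℝ) ≠ 0 := by positivity
    have hw' := hw i i.isLt
    rw [Fin.val_succ, ← ih]
    apply mul_left_cancel₀ (mul_ne_zero hb hi)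
    push_cast at h
    linear_combination (-w i) * h - ξ i.succ * hw'

end Generator

namespace Matrix

variable {n R : Type*} [Fintype n]

lemma apply_eq_zero_of_mul_diagonal_eq [DecidableEq n] [CommRing R] [NoZeroDivisors R]
    {A : Matrix n n R} {d : n → R} (h : A * diagonal d = diagonal d * A) {i j : n}
    (hij : d i ≠ d j) : A i j = 0 := by
  have hij' := congr_fun₂ h i j
  rw [mul_diagonal, diagonal_mul, mul_comm (d i)] at hij'
  exact (mul_eq_mul_left_iff.mp hij').resolve_left hij.symm

variable [CommRing R] {G K P D : Matrix n n R}

lemma transpose_mul_mul_commute (hGK : G * K = K * D) (hPG : P * G = Gᵀ * P) (hD : Dᵀ = D) :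
    Kᵀ * P * K * D = D * (Kᵀ * P * K) :=
  calc Kᵀ * P * K * D = Kᵀ * (P * G) * K := by simp only [Matrix.mul_assoc, hGK]
    _ = (G * K)ᵀ * P * K := by rw [hPG, transpose_mul]; simp only [Matrix.mul_assoc]
    _ = D * (Kᵀ * P * K) := by rw [hGK, transpose_mul, hD]; simp only [Matrix.mul_assoc]

lemma mul_transpose_mul_mul_eq_mul_transpose (hK : Kᵀ = K) (hGK : G * K = K * D)
    (hPD : P * D = D * P) (hD : Dᵀ = D) : G * (Kᵀ * P * K) = Kᵀ * P * K * Gᵀ :=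
  calc G * (Kᵀ * P * K) = K * (D * P) * K := by rw [hK]; simp only [← Matrix.mul_assoc, hGK]
    _ = K * P * (G * K)ᵀ := by
      rw [← hPD, hGK, transpose_mul, hD, hK]; simp only [Matrix.mul_assoc]
    _ = Kᵀ * P * K * Gᵀ := by rw [transpose_mul, hK]; simp only [Matrix.mul_assoc]

end Matrix

noncomputable def binomialWeight (N : ℕ) (s u : ℝ) (x : ℕ) : ℝ :=
  N.choose x * s ^ x * u ^ (N - x)

lemma ehrenfestDetailedBalance_binomialWeight {N : ℕ} {s u a b : ℝ} (h : s * b = u * a) :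
    EhrenfestDetailedBalance N a b (binomialWeight N s u) := by
  intro i hi
  have hchoose : (N.choose (i + 1) : ℝ) * (i + 1) = N.choose i * (N - i) := by
    rw [← Nat.cast_sub hi.le]
    exact_mod_cast Nat.choose_succ_right_eq N i
  have hpow : u ^ (N - i) = u ^ (N - (i + 1)) * u := by
    rw [← pow_succ]; congr 1; omega
  simp only [binomialWeight, hpow, pow_succ]
  linear_combination
    (s ^ i * u ^ (N - (i + 1))) * ((N.choose i : ℝ) * (N - i) * h.symm - s * b * hchoose)

lemma sum_binomialWeight {N : ℕ} {p q : ℝ} (hpq : p + q = 1) :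
    ∑ x ∈ range (N + 1), binomialWeight N p q x = 1 := by
  have h := (add_pow p q N).symm
  rw [hpq, one_pow] at h
  refine (sum_congr rfl fun x _ => ?_).trans h
  rw [binomialWeight]
  ring

noncomputable def krawtchoukMatrix (N : ℕ) (p : ℝ) : Matrix (Fin (N + 1)) (Fin (N + 1)) ℝ :=
  of fun l x => krawtchouk N p l x

-- `binomialWeight N (p / q) 1 j = C(N,j) (p/q)^j` is `1 / ‖K_j‖²`, the norm being that of
-- `ℓ²(binomialWeight N p q)`.
noncomputable def krawtchoukInverse (N : ℕ) (p q : ℝ) :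
    Matrix (Fin (N + 1)) (Fin (N + 1)) ℝ :=
  diagonal (fun x : Fin (N + 1) => binomialWeight N p q x) * (krawtchoukMatrix N p)ᵀ *
    diagonal (fun j : Fin (N + 1) => binomialWeight N (p / q) 1 j)

section KrawtchoukMatrix

variable {N : ℕ} {p q : ℝ}

lemma krawtchoukMatrix_transpose : (krawtchoukMatrix N p)ᵀ = krawtchoukMatrix N p := by
  ext l x
  exact krawtchouk_comm N p x l

theorem ehrenfestGenerator_mul_krawtchoukMatrix (hp : p ≠ 0) (hpq : p + q = 1) :
    ehrenfestGenerator N p q * krawtchoukMatrix N p =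
      krawtchoukMatrix N p * diagonal (fun x : Fin (N + 1) => -(x : ℝ)) := by
  ext l x
  rw [mul_apply, mul_diagonal]
  simp only [krawtchoukMatrix, of_apply]
  rw [sum_ehrenfestGenerator_mul l (fun k => krawtchouk N p k x),
    krawtchouk_recurrence hp hpq l (Nat.lt_succ_iff.mp x.isLt)]
  ring

theorem krawtchoukMatrix_mul_krawtchoukInverse (hp : p ≠ 0) (hq : q ≠ 0) (hpq : p + q = 1) :
    krawtchoukMatrix N p * krawtchoukInverse N p q = 1 := by
  set K := krawtchoukMatrix N p
  set P := diagonal (fun x : Fin (N + 1) => binomialWeight N p q x)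
  set D := diagonal (fun x : Fin (N + 1) => -(x : ℝ))
  have hK : Kᵀ = K := krawtchoukMatrix_transpose
  have hGK := ehrenfestGenerator_mul_krawtchoukMatrix (N := N) hp hpq
  have hD : Dᵀ = D := diagonal_transpose _
  have hPG : P * ehrenfestGenerator N p q = (ehrenfestGenerator N p q)ᵀ * P :=
    diagonal_mul_ehrenfestGenerator (ehrenfestDetailedBalance_binomialWeight (mul_comm p q))
  -- the Gram matrix commutes with `D`, whose diagonal entries are distinct
  have hgram : Kᵀ * P * K = diagonal (fun x => (Kᵀ * P * K) x x) := by
    ext x y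
    by_cases hxy : x = y
    · simp [hxy]
    · rw [diagonal_apply_ne _ hxy]
      refine apply_eq_zero_of_mul_diagonal_eq (transpose_mul_mul_commute hGK hPG hD) ?_
      simpa [Fin.val_inj] using hxy
  have hsymm :=
    mul_transpose_mul_mul_eq_mul_transpose (P := P) hK hGK (commute_diagonal _ _).eq hD
  rw [hgram] at hsymm
  have hnorm := mul_weight_eq_of_ehrenfestGenerator_mul_diagonal hq
    (ehrenfestDetailedBalance_binomialWeight (s := p / q) (u := 1) (by field_simp)) hsymm
  have hgram₀ : (Kᵀ * P * K) 0 0 = 1 := by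
    rw [mul_apply]
    simp only [K, P, mul_diagonal, transpose_apply, krawtchoukMatrix, of_apply, Fin.val_zero,
      krawtchouk_comm N p _ 0, krawtchouk_zero_left, mul_one, one_mul]
    exact (Fin.sum_univ_eq_sum_range _ _).trans (sum_binomialWeight hpq)
  calc K * krawtchoukInverse N p q
      = K * (P * Kᵀ * diagonal fun j : Fin (N + 1) => binomialWeight N (p / q) 1 j) := rfl
    _ = Kᵀ * P * K * diagonal fun j : Fin (N + 1) => binomialWeight N (p / q) 1 j := by
        rw [hK]; simp only [Matrix.mul_assoc]
    _ = 1 := by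
      rw [hgram, diagonal_mul_diagonal, ← diagonal_one]
      congr 1
      ext x
      rw [hnorm, hgram₀]
      simp [binomialWeight]

theorem krawtchoukMatrix_mul_diagonal_mul_krawtchoukInverse_apply (e : ℕ → ℝ)
    (i j : Fin (N + 1)) :
    (krawtchoukMatrix N p * diagonal (fun x : Fin (N + 1) => e x) * krawtchoukInverse N p q) i j =
      binomialWeight N (p / q) 1 j * ∑ x ∈ range (N + 1),
        binomialWeight N p q x * krawtchouk N p i x * krawtchouk N p j x * e x := by
  simp only [krawtchoukInverse, ← Matrix.mul_assoc]
  rw [mul_diagonal, mul_apply, sum_mul, mul_sum, ← Fin.sum_univ_eq_sum_range]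
  refine sum_congr rfl fun x _ => ?_
  simp only [mul_diagonal, transpose_apply, krawtchoukMatrix, of_apply]
  ring

theorem exp_smul_ehrenfestGenerator (hp : p ≠ 0) (hq : q ≠ 0) (hpq : p + q = 1) (c t : ℝ) :
    NormedSpace.exp (t • ehrenfestGenerator N (c * p) (c * q)) =
      krawtchoukMatrix N p * diagonal (fun x : Fin (N + 1) => Real.exp (-(c * x * t))) *
        krawtchoukInverse N p q := by
  have hKW := krawtchoukMatrix_mul_krawtchoukInverse (N := N) hp hq hpq
  let U : (Matrix (Fin (N + 1)) (Fin (N + 1)) ℝ)ˣ := ⟨_, _, hKW, mul_eq_one_comm.mp hKW⟩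
  have hG : ehrenfestGenerator N p q =
      krawtchoukMatrix N p * diagonal (fun x : Fin (N + 1) => -(x : ℝ)) *
        krawtchoukInverse N p q := by
    rw [← ehrenfestGenerator_mul_krawtchoukMatrix hp hpq, Matrix.mul_assoc, hKW, Matrix.mul_one]
  have hconj : t • ehrenfestGenerator N (c * p) (c * q) =
      U * diagonal (fun x : Fin (N + 1) => -(c * x * t)) * U⁻¹ := by
    have hD : diagonal (fun x : Fin (N + 1) => -(c * x * t)) =
        (t * c) • diagonal (fun x : Fin (N + 1) => -(x : ℝ)) := by
      rw [← diagonal_smul]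
      congr 1
      ext x
      simp only [Pi.smul_apply, smul_eq_mul]
      ring
    rw [ehrenfestGenerator_mul_mul_eq_smul, smul_smul, hG, hD, Matrix.mul_smul, Matrix.smul_mul]
    rfl
  rw [hconj, Matrix.exp_units_conj, exp_diagonal]
  congr
  ext x
  simp [Real.exp_eq_exp_ℝ]

end KrawtchoukMatrix

theorem ehrenfest_semigroup_eq_exp_generator_general (N : ℕ) (lam α β : ℝ)
    (hα : α ∈ Set.Ioc (0 : ℝ) 1) (hβ : β ∈ Set.Ioc (0 : ℝ) 1)
    (p q : ℝ) (hp : p = α / (α + β)) (hq : q = 1 - p)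
    (Q : Matrix (Fin (N + 1)) (Fin (N + 1)) ℝ)
    (hQ : ∀ i j : Fin (N + 1),
      Q i j =
        if (j : ℕ) = (i : ℕ) + 1 then lam * α * ((N : ℝ) - (i : ℕ))
        else if (j : ℕ) + 1 = (i : ℕ) then lam * β * (i : ℕ)
        else if i = j then -(lam * α * ((N : ℝ) - (i : ℕ))) - lam * β * (i : ℕ)
        else 0)
    (t : ℝ) (i j : Fin (N + 1)) :
    NormedSpace.exp (t • Q) i j = ehrenfestP N p q lam α β (i : ℕ) (j : ℕ) t := by
  have hαβ : α + β ≠ 0 := (add_pos hα.1 hβ.1).ne'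
  have hpq : p + q = 1 := by rw [hq]; ring
  have hq' : q = β / (α + β) := by rw [hq, hp]; field_simp; ring
  have hp₀ : p ≠ 0 := hp ▸ div_ne_zero hα.1.ne' hαβ
  have hq₀ : q ≠ 0 := hq' ▸ div_ne_zero hβ.1.ne' hαβ
  have hQ' : Q = ehrenfestGenerator N (lam * (α + β) * p) (lam * (α + β) * q) := by
    have ha : lam * (α + β) * p = lam * α := by rw [hp]; field_simp
    have hb : lam * (α + β) * q = lam * β := by rw [hq']; field_simp
    ext k l
    rw [ha, hb, hQ, ehrenfestGenerator_apply, ehrenfestRate]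
    simp only [Fin.val_inj]
  rw [hQ', exp_smul_ehrenfestGenerator hp₀ hq₀ hpq,
    krawtchoukMatrix_mul_diagonal_mul_krawtchoukInverse_apply
      (fun x => Real.exp (-(lam * (α + β) * x * t)))]
  simp [ehrenfestP, binomialWeight]

/-- Karlin–McGregor representation: the matrix exponential of the birth-and-death
generator of the Ehrenfest process has entries `p_{ij}(t)`. -/
theorem ehrenfest_semigroup_eq_exp_generator (N : ℕ) (lam α β : ℝ) (hlam : 0 < lam)
    (hα : α ∈ Set.Ioc (0 : ℝ) 1) (hβ : β ∈ Set.Ioc (0 : ℝ) 1)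
    (p q : ℝ) (hp : p = α / (α + β)) (hq : q = 1 - p)
    (Q : Matrix (Fin (N + 1)) (Fin (N + 1)) ℝ)
    (hQ : ∀ i j : Fin (N + 1),
      Q i j =
        if (j : ℕ) = (i : ℕ) + 1 then lam * α * ((N : ℝ) - (i : ℕ))
        else if (j : ℕ) + 1 = (i : ℕ) then lam * β * (i : ℕ)
        else if i = j then -(lam * α * ((N : ℝ) - (i : ℕ))) - lam * β * (i : ℕ)
        else 0)
    (t : ℝ) (ht : 0 ≤ t) (i j : Fin (N + 1)) :
    NormedSpace.exp (t • Q) i j = ehrenfestP N p q lam α β (i : ℕ) (j : ℕ) t :=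
  ehrenfest_semigroup_eq_exp_generator_general N lam α β hα hβ p q hp hq Q hQ t i j
end

section
/- The binomial distribution is the limiting distribution of the Ehrenfest process (Theorem 3.3(c)): for all i, j ∈ {0,1,…,N}, p_{ij}(t) converges to ω(j) := C(N,j) p^j q^{N−j} as t → ∞. -/
open Finset

lemma krawtchouk_zero (N : ℕ) (p : ℝ) (l : ℕ) : krawtchouk N p l 0 = 1 := by
  unfold krawtchouk
  rw [Finset.sum_eq_single 0]
  · simp
  · intro k hk hk0
    have : (ascPochhammer ℝ k).eval (-(0:ℕ) : ℝ) = 0 := by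
      simp [ascPochhammer_eval_zero, hk0]
    rw [this]
    simp
  · intro h
    simp at h

/-- The binomial distribution is the limiting distribution of the Ehrenfest process. -/
theorem ehrenfest_limiting_distribution (N : ℕ) (lam α β : ℝ) (hlam : 0 < lam)
    (hα : α ∈ Set.Ioc (0 : ℝ) 1) (hβ : β ∈ Set.Ioc (0 : ℝ) 1)
    (p q : ℝ) (hp : p = α / (α + β)) (hq : q = 1 - p)
    (i j : ℕ) (hi : i ≤ N) (hj : j ≤ N) :
    Filter.Tendsto (fun t : ℝ => ehrenfestP N p q lam α β i j t) Filter.atTop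
      (nhds ((N.choose j : ℝ) * p ^ j * q ^ (N - j))) := by
  have hab : 0 < α + β := add_pos hα.1 hβ.1
  have hp0 : 0 < p := by rw [hp]; exact div_pos hα.1 hab
  have hp1 : p < 1 := by
    rw [hp, div_lt_one hab]; linarith [hβ.1]
  have hq0 : 0 < q := by rw [hq]; linarith
  -- limit of each summand
  set L : ℕ → ℝ := fun x => if x = 0 then q ^ N else 0 with hL
  have hsum : Filter.Tendsto
      (fun t : ℝ => ∑ x ∈ Finset.range (N + 1),
        (N.choose x : ℝ) * p ^ x * q ^ (N - x) * krawtchouk N p i x * krawtchouk N p j x *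
          Real.exp (-(lam * (α + β) * (x : ℝ) * t)))
      Filter.atTop (nhds (∑ x ∈ Finset.range (N + 1), L x)) := by
    apply tendsto_finset_sum _
    intro x hx
    rcases Nat.eq_zero_or_pos x with h0 | hxpos
    · subst h0
      simp only [hL, if_pos rfl]
      have : (fun t : ℝ => (N.choose 0 : ℝ) * p ^ 0 * q ^ (N - 0) * krawtchouk N p i 0 *
          krawtchouk N p j 0 * Real.exp (-(lam * (α + β) * ((0:ℕ) : ℝ) * t))) =
          fun _ : ℝ => q ^ N := by
        funext t
        simp [krawtchouk_zero]
      rw [this]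
      exact tendsto_const_nhds
    · have hxpos' : (0 : ℝ) < lam * (α + β) * (x : ℝ) := by
        have : (0:ℝ) < (x : ℝ) := by exact_mod_cast hxpos
        positivity
      have hexp : Filter.Tendsto (fun t : ℝ => Real.exp (-(lam * (α + β) * (x : ℝ) * t)))
          Filter.atTop (nhds 0) := by
        have h1 : Filter.Tendsto (fun t : ℝ => lam * (α + β) * (x : ℝ) * t)
            Filter.atTop Filter.atTop := by
          simpa using Filter.Tendsto.const_mul_atTop hxpos' (Filter.tendsto_id (α := ℝ))
        exact Real.tendsto_exp_neg_atTop_nhds_zero.comp h1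
      have hne : x ≠ 0 := hxpos.ne'
      simp only [hL, if_neg hne]
      have := hexp.const_mul ((N.choose x : ℝ) * p ^ x * q ^ (N - x) * krawtchouk N p i x *
        krawtchouk N p j x)
      simpa [mul_comm] using this
  have hLsum : (∑ x ∈ Finset.range (N + 1), L x) = q ^ N := by
    rw [Finset.sum_eq_single 0]
    · simp [hL]
    · intro k _ hk0; simp [hL, hk0]
    · intro h; simp at h
  rw [hLsum] at hsum
  have hfinal := hsum.const_mul ((N.choose j : ℝ) * (p / q) ^ j)
  have heq : (N.choose j : ℝ) * (p / q) ^ j * q ^ N =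
      (N.choose j : ℝ) * p ^ j * q ^ (N - j) := by
    rw [div_pow, pow_sub₀ q hq0.ne' hj]
    field_simp
  rw [heq] at hfinal
  unfold ehrenfestP
  exact hfinal
end

section
/- Krawtchouk eigenvectors of the Ehrenfest generator: let Q be the (N+1)×(N+1) real matrix indexed by {0,…,N} with Q_{l,l+1} = λα(N−l), Q_{l,l−1} = λβ·l, Q_{l,l} = −λα(N−l) − λβ·l, and Q_{l,m} = 0 otherwise. Then for every x ∈ {0,1,…,N}, the vector v ∈ ℝ^{N+1} with components v_l := K_l(x) satisfies Q·v = −λ(α+β)·x · v. -/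
open Finset Matrix Polynomial

/-- Krawtchouk with real first index. -/
noncomputable def kraw (N : ℕ) (p : ℝ) (x : ℕ) (l : ℝ) : ℝ :=
  ∑ k ∈ Finset.range (N + 1),
    ((ascPochhammer ℝ k).eval (-l) * (ascPochhammer ℝ k).eval (-(x : ℝ))) /
      ((ascPochhammer ℝ k).eval (-(N : ℝ)) * (Nat.factorial k : ℝ)) * (1 / p) ^ k

lemma krawtchouk_eq_kraw (N : ℕ) (p : ℝ) (l x : ℕ) :
    krawtchouk N p l x = kraw N p x (l : ℝ) := rfl

noncomputable def pev (k : ℕ) (y : ℝ) : ℝ := (ascPochhammer ℝ k).eval y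

lemma pev_zero (y : ℝ) : pev 0 y = 1 := by simp [pev]

lemma pev_succ (k : ℕ) (y : ℝ) : pev (k + 1) y = pev k y * (y + k) :=
  ascPochhammer_succ_eval k y

lemma pev_succ_left (k : ℕ) (y : ℝ) : pev (k + 1) y = y * pev k (y + 1) := by
  unfold pev
  rw [ascPochhammer_succ_left]
  simp [eval_comp]

lemma pev_negN_ne (N : ℕ) : ∀ k ≤ N, pev k (-(N : ℝ)) ≠ 0 := by
  intro k
  induction k with
  | zero => intro _; simp [pev_zero]
  | succ k ih =>
    intro hk
    rw [pev_succ]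
    have h1 : pev k (-(N : ℝ)) ≠ 0 := ih (by omega)
    have h2 : (-(N : ℝ) + k) ≠ 0 := by
      have : (k : ℝ) < N := by exact_mod_cast Nat.lt_of_succ_le hk
      intro h; nlinarith
    exact mul_ne_zero h1 h2

lemma pev_neg_nat_vanish (x : ℕ) : ∀ k, x < k → pev k (-(x : ℝ)) = 0 := by
  intro k
  induction k with
  | zero => omega
  | succ k ih =>
    intro hk
    rw [pev_succ]
    rcases Nat.lt_or_ge x k with h | h
    · rw [ih h, zero_mul]
    · have : x = k := by omega
      subst this
      simp

noncomputable def uu (N x : ℕ) (p : ℝ) (k : ℕ) : ℝ :=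
  pev k (-(x : ℝ)) / (pev k (-(N : ℝ)) * (Nat.factorial k : ℝ)) * (1 / p) ^ k

lemma uu_zero (N x : ℕ) (p : ℝ) : uu N x p 0 = 1 := by
  simp [uu, pev_zero]

lemma kraw_eq_sum (N x : ℕ) (p : ℝ) (l : ℝ) :
    kraw N p x l = ∑ k ∈ Finset.range (N + 1), pev k (-l) * uu N x p k := by
  refine Finset.sum_congr rfl fun k _ => ?_
  unfold uu pev
  ring

lemma uu_succ (N x : ℕ) (p : ℝ) (hp : p ≠ 0) (j : ℕ) (hj : j < N) :
    uu N x p (j + 1) * ((-(N : ℝ) + j) * ((j : ℝ) + 1) * p) = uu N x p j * (-(x : ℝ) + j) := by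
  unfold uu
  rw [pev_succ, pev_succ, Nat.factorial_succ, pow_succ]
  have h1 : pev j (-(N : ℝ)) ≠ 0 := pev_negN_ne N j (le_of_lt hj)
  have h2 : (-(N : ℝ) + j) ≠ 0 := by
    have : (j : ℝ) < N := by exact_mod_cast hj
    intro h; nlinarith
  have h3 : (Nat.factorial j : ℝ) ≠ 0 := by exact_mod_cast Nat.factorial_ne_zero j
  push_cast
  field_simp

/-- The key three-term recurrence for Krawtchouk polynomials in the degree index. -/
lemma kraw_recurrence (N x : ℕ) (hx : x ≤ N) (p : ℝ) (hp : p ≠ 0) (l : ℝ) :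
    p * ((N : ℝ) - l) * kraw N p x (l + 1) + (1 - p) * l * kraw N p x (l - 1)
      - (p * ((N : ℝ) - l) + (1 - p) * l) * kraw N p x l = -(x : ℝ) * kraw N p x l := by
  set u : ℕ → ℝ := uu N x p with hu
  set D : ℕ → ℝ := fun k =>
    p * ((N : ℝ) - l) * pev k (-(l + 1)) * u k + (1 - p) * l * pev k (-(l - 1)) * u k
      + ((x : ℝ) - p * ((N : ℝ) - l) - (1 - p) * l) * pev k (-l) * u k with hD
  set F : ℕ → ℝ := fun j => ((j : ℝ) - x) * pev j (-l) * u j with hF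
  have step : ∀ j < N, D (j + 1) = F j - F (j + 1) := by
    intro j hj
    have e1 : pev (j + 1) (-(l + 1)) = -(l + 1) * pev j (-l) := by
      rw [pev_succ_left, show -(l + 1) + 1 = -l by ring]
    have e2 : pev (j + 1) (-(l - 1)) = pev j (-(l - 1)) * (-(l - 1) + j) := pev_succ j _
    have e3 : pev (j + 1) (-l) = pev j (-l) * (-l + j) := pev_succ j _
    have hrel : pev j (-l) * (-l + j) = -l * pev j (-(l - 1)) := by
      rw [← pev_succ, pev_succ_left, show -l + 1 = -(l - 1) by ring]
    have hw : u (j + 1) * ((-(N : ℝ) + j) * ((j : ℝ) + 1) * p) = u j * (-(x : ℝ) + j) :=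
      uu_succ N x p hp j hj
    simp only [hD, hF, e1, e2, e3]
    push_cast
    linear_combination ((1 - p) * (-(l - 1) + j) * u (j + 1)) * hrel + pev j (-l) * hw
  have hD0 : D 0 = (x : ℝ) := by
    simp only [hD]
    rw [pev_zero, pev_zero, pev_zero, hu, uu_zero]
    ring
  have hFN : F N = 0 := by
    rcases Nat.lt_or_ge x N with h | h
    · have : u N = 0 := by
        simp [hu, uu, pev_neg_nat_vanish x N h]
      simp [hF, this]
    · have : x = N := le_antisymm hx h
      subst this
      simp [hF]
  have main : ∑ k ∈ Finset.range (N + 1), D k = 0 := by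
    rw [Finset.sum_range_succ']
    have : ∑ j ∈ Finset.range N, D (j + 1) = ∑ j ∈ Finset.range N, (F j - F (j + 1)) :=
      Finset.sum_congr rfl fun j hj => step j (Finset.mem_range.mp hj)
    rw [this, Finset.sum_range_sub', hD0, hFN]
    have : F 0 = -(x : ℝ) := by
      simp only [hF]
      rw [pev_zero, hu, uu_zero]
      push_cast
      ring
    rw [this]
    ring
  have expand : p * ((N : ℝ) - l) * kraw N p x (l + 1) + (1 - p) * l * kraw N p x (l - 1)
      - (p * ((N : ℝ) - l) + (1 - p) * l) * kraw N p x l + (x : ℝ) * kraw N p x l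
      = ∑ k ∈ Finset.range (N + 1), D k := by
    rw [kraw_eq_sum, kraw_eq_sum, kraw_eq_sum, ← hu]
    simp only [Finset.mul_sum, ← Finset.sum_sub_distrib, ← Finset.sum_add_distrib]
    refine Finset.sum_congr rfl fun k _ => ?_
    simp only [hD]
    ring
  linarith [expand, main]

/-- The Krawtchouk vectors are eigenvectors of the Ehrenfest birth-and-death generator,
with eigenvalue `-λ(α+β)x`. -/
theorem ehrenfest_generator_krawtchouk_eigenvector (N : ℕ) (lam α β : ℝ) (hlam : 0 < lam)
    (hα : α ∈ Set.Ioc (0 : ℝ) 1) (hβ : β ∈ Set.Ioc (0 : ℝ) 1)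
    (p q : ℝ) (hp : p = α / (α + β)) (hq : q = 1 - p)
    (Q : Matrix (Fin (N + 1)) (Fin (N + 1)) ℝ)
    (hQ : ∀ l m : Fin (N + 1),
      Q l m =
        if (m : ℕ) = (l : ℕ) + 1 then lam * α * ((N : ℝ) - (l : ℕ))
        else if (m : ℕ) + 1 = (l : ℕ) then lam * β * (l : ℕ)
        else if l = m then -(lam * α * ((N : ℝ) - (l : ℕ))) - lam * β * (l : ℕ)
        else 0)
    (x : ℕ) (hx : x ≤ N) :
    Q.mulVec (fun l : Fin (N + 1) => krawtchouk N p (l : ℕ) x) =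
      (-(lam * (α + β) * (x : ℝ))) • (fun l : Fin (N + 1) => krawtchouk N p (l : ℕ) x) := by
  have hα0 : 0 < α := hα.1
  have hβ0 : 0 < β := hβ.1
  have hαβ : (0 : ℝ) < α + β := by linarith
  have hαβ' : α + β ≠ 0 := ne_of_gt hαβ
  have hp0 : p ≠ 0 := by rw [hp]; positivity
  have hpα : lam * (α + β) * p = lam * α := by rw [hp]; field_simp
  have hpβ : lam * (α + β) * (1 - p) = lam * β := by rw [hp]; field_simp; ring
  funext l
  simp only [Matrix.mulVec, dotProduct, Pi.smul_apply, smul_eq_mul]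
  set w : ℕ → ℝ := fun n => kraw N p x (n : ℝ) with hw
  set g : ℕ → ℝ := fun n =>
    (if n = (l : ℕ) + 1 then lam * α * ((N : ℝ) - (l : ℕ))
      else if n + 1 = (l : ℕ) then lam * β * (l : ℕ)
      else if (l : ℕ) = n then -(lam * α * ((N : ℝ) - (l : ℕ))) - lam * β * (l : ℕ)
      else 0) * w n with hg
  have h1 : ∑ m : Fin (N + 1), Q l m * krawtchouk N p (m : ℕ) x
      = ∑ n ∈ Finset.range (N + 1), g n := by
    rw [← Fin.sum_univ_eq_sum_range g (N + 1)]
    refine Finset.sum_congr rfl fun m _ => ?_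
    rw [hQ, krawtchouk_eq_kraw, hg]
    congr 2
    simp only [Fin.ext_iff]
  rw [h1]
  have split : ∀ n ∈ Finset.range (N + 1), g n =
      (if n = (l : ℕ) + 1 then lam * α * ((N : ℝ) - (l : ℕ)) * w n else 0)
      + (if n = (l : ℕ) - 1 ∧ 1 ≤ (l : ℕ) then lam * β * (l : ℕ) * w n else 0)
      + (if n = (l : ℕ) then (-(lam * α * ((N : ℝ) - (l : ℕ))) - lam * β * (l : ℕ)) * w n
          else 0) := by
    intro n _
    simp only [hg]
    split_ifs <;> first | omega | ring
  rw [Finset.sum_congr rfl split, Finset.sum_add_distrib, Finset.sum_add_distrib]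
  have hS1 : ∑ n ∈ Finset.range (N + 1),
      (if n = (l : ℕ) + 1 then lam * α * ((N : ℝ) - (l : ℕ)) * w n else 0)
      = lam * α * ((N : ℝ) - (l : ℕ)) * w ((l : ℕ) + 1) := by
    rw [Finset.sum_ite_eq' (Finset.range (N + 1)) ((l : ℕ) + 1)
      (fun n => lam * α * ((N : ℝ) - (l : ℕ)) * w n)]
    by_cases h : (l : ℕ) + 1 ∈ Finset.range (N + 1)
    · rw [if_pos h]
    · rw [if_neg h]
      have hl : (l : ℕ) = N := by
        have := l.isLt
        simp only [Finset.mem_range] at h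
        omega
      rw [hl]
      simp
  have hS2 : ∑ n ∈ Finset.range (N + 1),
      (if n = (l : ℕ) - 1 ∧ 1 ≤ (l : ℕ) then lam * β * (l : ℕ) * w n else 0)
      = lam * β * (l : ℕ) * w ((l : ℕ) - 1) := by
    by_cases hl : 1 ≤ (l : ℕ)
    · have : ∀ n, ((n = (l : ℕ) - 1 ∧ 1 ≤ (l : ℕ))) ↔ (n = (l : ℕ) - 1) := by
        intro n; simp [hl]
      simp only [this]
      rw [Finset.sum_ite_eq' (Finset.range (N + 1)) ((l : ℕ) - 1)
        (fun n => lam * β * (l : ℕ) * w n)]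
      rw [if_pos]
      simp only [Finset.mem_range]
      have := l.isLt
      omega
    · have hl0 : (l : ℕ) = 0 := by omega
      simp [hl0]
  have hS3 : ∑ n ∈ Finset.range (N + 1),
      (if n = (l : ℕ) then (-(lam * α * ((N : ℝ) - (l : ℕ))) - lam * β * (l : ℕ)) * w n else 0)
      = (-(lam * α * ((N : ℝ) - (l : ℕ))) - lam * β * (l : ℕ)) * w (l : ℕ) := by
    rw [Finset.sum_ite_eq' (Finset.range (N + 1)) ((l : ℕ))
      (fun n => (-(lam * α * ((N : ℝ) - (l : ℕ))) - lam * β * (l : ℕ)) * w n)]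
    rw [if_pos]
    simp only [Finset.mem_range]
    exact l.isLt
  rw [hS1, hS2, hS3, krawtchouk_eq_kraw]
  have key := kraw_recurrence N x hx p hp0 ((l : ℕ) : ℝ)
  simp only [hw]
  by_cases hl : 1 ≤ (l : ℕ)
  · have c1 : (((l : ℕ) + 1 : ℕ) : ℝ) = ((l : ℕ) : ℝ) + 1 := by push_cast; ring
    have c2 : (((l : ℕ) - 1 : ℕ) : ℝ) = ((l : ℕ) : ℝ) - 1 := by
      rw [Nat.cast_sub hl]; norm_num
    rw [c1, c2]
    linear_combination (lam * (α + β)) * key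
      - kraw N p x (((l : ℕ) : ℝ) + 1) * (((N : ℝ) - (l : ℕ)) * hpα)
      - kraw N p x (((l : ℕ) : ℝ) - 1) * (((l : ℕ) : ℝ) * hpβ)
      + kraw N p x (((l : ℕ) : ℝ)) * (((N : ℝ) - (l : ℕ)) * hpα + ((l : ℕ) : ℝ) * hpβ)
  · have hl0 : (l : ℕ) = 0 := by omega
    rw [hl0] at key ⊢
    norm_num at key ⊢
    linear_combination (lam * (α + β)) * key
      - kraw N p x 1 * ((N : ℝ) * hpα)
      + kraw N p x 0 * ((N : ℝ) * hpα)
end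

section
/- Product factorization of the Ehrenfest Feynman–Kac semigroup (equation (12) of the paper, in matrix form): let N ≥ 1, λ > 0, α, β ∈ (0,1], h > 0, r_m ∈ ℝ, τ > 0. Let G be the (N+1)×(N+1) real matrix indexed by {0,…,N} with G_{k,k+1} = λα(N−k), G_{k,k−1} = λβ·k, G_{k,k} = −λα(N−k) − λβ·k − (h·k + r_m), and G_{k,j} = 0 otherwise. Let M be the 2×2 real matrix indexed by {0,1} with rows (−λα, λα) and (λβ, −λβ−h), and let u := exp(τ·M)·(1,1)ᵀ with components u_0, u_1. Then for every k ∈ {0,…,N}, the k-th component of exp(τ·G)·(1,…,1)ᵀ equals e^{−r_m·τ} · u_1^k · u_0^{N−k}. -/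
/-!
Let `u(t) = exp(tM)·1`, so that `u' = M u`, and put `F_k(t) = e^{-r_m t} u_1(t)^k u_0(t)^{N-k}`.
Differentiating the monomial with the two-state equations for `u_0, u_1` and regrouping the terms
gives exactly the killed Ehrenfest generator applied to the monomials: `F' = G F`, with `F(0) = 1`.
Linear ODEs have unique solutions (`s ↦ exp((τ - s)G) F(s)` is constant), so `F(τ) = exp(τG)·1`.
-/

open Matrix NormedSpace

theorem Fin.sum_ite_val_eq {M : Type*} [AddCommMonoid M] (n c : ℕ) (x : M) :
    (∑ j : Fin n, if (j : ℕ) = c then x else 0) = if c < n then x else 0 :=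
  (Fin.sum_univ_eq_sum_range (fun m => if m = c then x else 0) n).trans (by simp)

theorem mulVec_apply_of_tridiagonal {R : Type*} [NonUnitalNonAssocSemiring R] {N : ℕ}
    {a b d : ℕ → R} {G : Matrix (Fin (N + 1)) (Fin (N + 1)) R}
    (hG : ∀ k j : Fin (N + 1), G k j =
      if (j : ℕ) = k + 1 then a k else if (j : ℕ) + 1 = k then b k else if k = j then d k else 0)
    (ha : a N = 0) (hb : b 0 = 0) (v : ℕ → R) (k : Fin (N + 1)) :
    (G *ᵥ fun j => v j) k = a k * v (k + 1) + b k * v (k - 1) + d k * v k := by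
  have hterm : ∀ j : Fin (N + 1), G k j * v j =
      (if (j : ℕ) = k + 1 then a k * v (k + 1) else 0) +
      (if (j : ℕ) = k - 1 then b k * v (k - 1) else 0) +
      (if (j : ℕ) = k then d k * v k else 0) := by
    intro j
    rw [hG]
    obtain ⟨k, hk⟩ := k
    obtain ⟨j, hj⟩ := j
    simp only [Fin.mk.injEq]
    rcases k with _ | k <;> split_ifs <;> first | contradiction | omega | (subst_vars; simp [hb])
  have hup : (if (k : ℕ) + 1 < N + 1 then a k * v (k + 1) else 0) = a k * v (k + 1) := by
    split_ifs with h
    · rfl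
    · rw [show (k : ℕ) = N by omega, ha, zero_mul]
  rw [mulVec, dotProduct, Finset.sum_congr rfl fun j _ => hterm j, Finset.sum_add_distrib,
    Finset.sum_add_distrib, Fin.sum_ite_val_eq, Fin.sum_ite_val_eq, Fin.sum_ite_val_eq, hup,
    if_pos (by omega), if_pos k.isLt]

theorem HasDerivAt.matrix_mulVec {𝕜 m n : Type*} [NontriviallyNormedField 𝕜] [CompleteSpace 𝕜]
    [Fintype m] [Fintype n] {A : 𝕜 → Matrix m n 𝕜} {A' : Matrix m n 𝕜} {v : 𝕜 → n → 𝕜}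
    {v' : n → 𝕜} {t : 𝕜}
    (hA : HasDerivAt A A' t) (hv : HasDerivAt v v' t) :
    HasDerivAt (fun s => A s *ᵥ v s) (A t *ᵥ v' + A' *ᵥ v t) t := by
  -- `Matrix` has no global norm; the operator norm induces the product topology, so any
  -- statement proved with it is the one about the default topology.
  open scoped Matrix.Norms.Operator in
  exact (LinearMap.toContinuousLinearMap (LinearMap.toContinuousLinearMap.toLinearMap ∘ₗ
    mulVecBilin 𝕜 𝕜 : Matrix m n 𝕜 →ₗ[𝕜] (n → 𝕜) →L[𝕜] m → 𝕜)).hasDerivAt_of_bilinear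
    (fun _ => hA) (fun _ => hv)

section LinearODE

variable {ι : Type*} [Fintype ι] [DecidableEq ι]

theorem Matrix.hasDerivAt_exp_smul (A : Matrix ι ι ℝ) (t : ℝ) :
    HasDerivAt (fun s : ℝ => exp (s • A)) (A * exp (t • A)) t := by
  open scoped Matrix.Norms.Operator in exact hasDerivAt_exp_smul_const' A t

theorem hasDerivAt_exp_smul_mulVec (A : Matrix ι ι ℝ) (v : ι → ℝ) (t : ℝ) :
    HasDerivAt (fun s : ℝ => exp (s • A) *ᵥ v) (A *ᵥ (exp (t • A) *ᵥ v)) t := by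
  have h := (hasDerivAt_exp_smul A t).matrix_mulVec (hasDerivAt_const t v)
  rwa [mulVec_zero, zero_add, ← mulVec_mulVec] at h

theorem eq_exp_smul_mulVec_of_hasDerivAt (A : Matrix ι ι ℝ) {F : ℝ → ι → ℝ}
    (hF : ∀ t, HasDerivAt F (A *ᵥ F t) t) (τ : ℝ) : F τ = exp (τ • A) *ᵥ F 0 := by
  have hψ : ∀ t, HasDerivAt (fun s => exp ((τ - s) • A) *ᵥ F s) 0 t := by
    intro t
    have hE : HasDerivAt (fun s => exp ((τ - s) • A)) ((-1 : ℝ) • (A * exp ((τ - t) • A))) t := by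
      open scoped Matrix.Norms.Operator in
      exact (hasDerivAt_exp_smul A (τ - t)).scomp t ((hasDerivAt_id t).const_sub τ)
    have hcomm := ((Commute.refl A).smul_left (τ - t)).exp_left
    refine (hE.matrix_mulVec (hF t)).congr_deriv ?_
    rw [neg_one_smul, neg_mulVec, mulVec_mulVec, hcomm.eq, add_neg_cancel]
  simpa using is_const_of_deriv_eq_zero (fun t => (hψ t).differentiableAt)
    (fun t => (hψ t).deriv) τ 0

end LinearODE

-- The truncated subtractions at `k = 0` and `k = N` are harmless: the terms they affect carry a
-- factor `k` or `N - k`.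
theorem ehrenfest_generator_apply_monomial {R : Type*} [CommRing R] {N k : ℕ} (hk : k ≤ N)
    (la lb h x y : R) :
    k * x ^ (k - 1) * (lb * y - (lb + h) * x) * y ^ (N - k) +
        x ^ k * ((N - k : ℕ) * y ^ (N - k - 1) * (la * x - la * y)) =
      la * (N - k) * (x ^ (k + 1) * y ^ (N - (k + 1))) + lb * k * (x ^ (k - 1) * y ^ (N - (k - 1)))
        - (la * (N - k) + lb * k + h * k) * (x ^ k * y ^ (N - k)) := by
  obtain ⟨p, rfl⟩ := Nat.exists_eq_add_of_le hk
  rw [Nat.add_sub_cancel_left, ← Nat.sub_sub, Nat.add_sub_cancel_left]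
  rcases k with _ | k
  · rcases p with _ | p
    · simp
    · simp only [Nat.cast_zero, zero_mul, zero_add, Nat.add_sub_cancel, pow_succ]
      push_cast
      ring
  · rw [show k + 1 + p - (k + 1 - 1) = p + 1 by omega, Nat.add_sub_cancel]
    rcases p with _ | p
    · simp only [Nat.cast_zero, zero_mul, Nat.zero_sub, pow_zero, pow_succ]
      push_cast
      ring
    · simp only [Nat.add_sub_cancel, pow_succ]
      push_cast
      ring

theorem hasDerivAt_ehrenfest_product {N : ℕ} {la lb h r : ℝ}
    {G : Matrix (Fin (N + 1)) (Fin (N + 1)) ℝ}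
    (hG : ∀ k j : Fin (N + 1),
      G k j =
        if (j : ℕ) = (k : ℕ) + 1 then la * ((N : ℝ) - (k : ℕ))
        else if (j : ℕ) + 1 = (k : ℕ) then lb * (k : ℕ)
        else if k = j then -(la * ((N : ℝ) - (k : ℕ))) - lb * (k : ℕ) - (h * (k : ℕ) + r)
        else 0)
    {u : ℝ → Fin 2 → ℝ} (hu : ∀ t, HasDerivAt u (!![-la, la; lb, -lb - h] *ᵥ u t) t) (t : ℝ) :
    HasDerivAt (fun s (k : Fin (N + 1)) => Real.exp (-(r * s)) * u s 1 ^ (k : ℕ) * u s 0 ^ (N - k))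
      (G *ᵥ fun k => Real.exp (-(r * t)) * u t 1 ^ (k : ℕ) * u t 0 ^ (N - k)) t := by
  rw [hasDerivAt_pi]
  intro k
  have hx : HasDerivAt (fun s => u s 1) (lb * u t 0 + (-lb - h) * u t 1) t := by
    simpa [mulVec, dotProduct, Fin.sum_univ_two] using hasDerivAt_pi.1 (hu t) 1
  have hy : HasDerivAt (fun s => u s 0) (-la * u t 0 + la * u t 1) t := by
    simpa [mulVec, dotProduct, Fin.sum_univ_two] using hasDerivAt_pi.1 (hu t) 0
  have he : HasDerivAt (fun s => Real.exp (-(r * s))) (Real.exp (-(r * t)) * -r) t := by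
    simpa using ((hasDerivAt_id t).const_mul r).neg.exp
  rw [mulVec_apply_of_tridiagonal (a := fun n => la * ((N : ℝ) - n)) (b := fun n => lb * n)
    (d := fun n => -(la * ((N : ℝ) - n)) - lb * n - (h * n + r)) hG (by simp) (by simp)
    (fun m => Real.exp (-(r * t)) * u t 1 ^ m * u t 0 ^ (N - m)) k]
  refine ((he.fun_mul (hx.fun_pow k)).fun_mul (hy.fun_pow (N - k))).congr_deriv ?_
  linear_combination Real.exp (-(r * t)) *
    ehrenfest_generator_apply_monomial k.is_le la lb h (u t 1) (u t 0)

theorem ehrenfest_feynman_kac_factorization_general (N : ℕ)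
    (lam α β h rm τ : ℝ)
    (G : Matrix (Fin (N + 1)) (Fin (N + 1)) ℝ)
    (hG : ∀ k j : Fin (N + 1),
      G k j =
        if (j : ℕ) = (k : ℕ) + 1 then lam * α * ((N : ℝ) - (k : ℕ))
        else if (j : ℕ) + 1 = (k : ℕ) then lam * β * (k : ℕ)
        else if k = j then
          -(lam * α * ((N : ℝ) - (k : ℕ))) - lam * β * (k : ℕ) - (h * (k : ℕ) + rm)
        else 0)
    (u : Fin 2 → ℝ)
    (hu : u = (NormedSpace.exp
        (τ • (!![-(lam * α), lam * α; lam * β, -(lam * β) - h] :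
          Matrix (Fin 2) (Fin 2) ℝ))).mulVec (fun _ => 1))
    (k : Fin (N + 1)) :
    (NormedSpace.exp (τ • G)).mulVec (fun _ => 1) k =
      Real.exp (-(rm * τ)) * (u 1) ^ (k : ℕ) * (u 0) ^ (N - (k : ℕ)) := by
  have hF := eq_exp_smul_mulVec_of_hasDerivAt G (hasDerivAt_ehrenfest_product (r := rm) hG
    (hasDerivAt_exp_smul_mulVec !![-(lam * α), lam * α; lam * β, -(lam * β) - h] fun _ => 1)) τ
  simp only [mul_zero, neg_zero, Real.exp_zero, zero_smul, exp_zero, one_mulVec, one_pow,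
    one_mul] at hF
  rw [← hF, hu]

/-- Product factorization of the Ehrenfest Feynman–Kac semigroup: the zero-coupon bond
price factorizes into powers of the two-state bond factors. -/
theorem ehrenfest_feynman_kac_factorization (N : ℕ) (hN : 1 ≤ N)
    (lam α β h rm τ : ℝ) (hlam : 0 < lam)
    (hα : α ∈ Set.Ioc (0 : ℝ) 1) (hβ : β ∈ Set.Ioc (0 : ℝ) 1)
    (hh : 0 < h) (hτ : 0 < τ)
    (G : Matrix (Fin (N + 1)) (Fin (N + 1)) ℝ)
    (hG : ∀ k j : Fin (N + 1),
      G k j =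
        if (j : ℕ) = (k : ℕ) + 1 then lam * α * ((N : ℝ) - (k : ℕ))
        else if (j : ℕ) + 1 = (k : ℕ) then lam * β * (k : ℕ)
        else if k = j then
          -(lam * α * ((N : ℝ) - (k : ℕ))) - lam * β * (k : ℕ) - (h * (k : ℕ) + rm)
        else 0)
    (u : Fin 2 → ℝ)
    (hu : u = (NormedSpace.exp
        (τ • (!![-(lam * α), lam * α; lam * β, -(lam * β) - h] :
          Matrix (Fin 2) (Fin 2) ℝ))).mulVec (fun _ => 1))
    (k : Fin (N + 1)) :
    (NormedSpace.exp (τ • G)).mulVec (fun _ => 1) k =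
      Real.exp (-(rm * τ)) * (u 1) ^ (k : ℕ) * (u 0) ^ (N - (k : ℕ)) :=
  ehrenfest_feynman_kac_factorization_general N lam α β h rm τ G hG u hu k
end
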